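/- arXiv:2401.11375 — 4 statements merged into one kernel-verified Lean document; each statement's English description precedes it below -/
import Mathlib

section
/- Let V be an n-dimensional complex vector space with a complete flag F_• (dim F_j = j) and Schubert index a = (a_1 < ... < a_k). Suppose i is such that i < k and a_i < a_{i+1} − 1 (i.e. a_i is essential and not the last index). Then F_{a_i} is the unique subspace W ⊆ V of dimension a_i such that dim(Λ ∩ W) ≥ i for every k-plane Λ satisfying dim(Λ ∩ F_{a_j}) ≥ j for all j. That is, if W has dimension a_i and dim(Λ ∩ W) ≥ i for all such Λ, then W = F_{a_i}. -/
open Module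

/-- A submodule not contained in either of two submodules contains an element
avoiding both. -/
lemma exists_mem_notMem_two {K : Type*} {V : Type*} [Field K] [AddCommGroup V] [Module K V]
    {p q r : Submodule K V} (hq : ¬ p ≤ q) (hr : ¬ p ≤ r) :
    ∃ v ∈ p, v ∉ q ∧ v ∉ r := by
  obtain ⟨x, hxp, hxq⟩ := SetLike.not_le_iff_exists.mp hq
  obtain ⟨y, hyp, hyr⟩ := SetLike.not_le_iff_exists.mp hr
  by_cases hxr : x ∈ r
  · by_cases hyq : y ∈ q
    · refine ⟨x + y, add_mem hxp hyp, fun h => hxq ?_, fun h => hyr ?_⟩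
      · have := sub_mem h hyq
        simpa using this
      · have := sub_mem h hxr
        simpa using this
    · exact ⟨y, hyp, hyq, hyr⟩
  · exact ⟨x, hxp, hxq, hxr⟩

/-- Adjoining a vector outside a submodule raises the finrank by one. -/
lemma finrank_sup_span_singleton_of_notMem {K : Type*} {V : Type*} [Field K] [AddCommGroup V]
    [Module K V] [FiniteDimensional K V] (Λ : Submodule K V) {t : V} (ht : t ∉ Λ) :
    finrank K ↥(Λ ⊔ (K ∙ t)) = finrank K Λ + 1 := by
  have ht0 : t ≠ 0 := fun h => ht (h ▸ Λ.zero_mem)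
  have hdis : Λ ⊓ (K ∙ t) = ⊥ := by
    rw [eq_bot_iff]
    intro x hx
    obtain ⟨hx1, hx2⟩ := Submodule.mem_inf.mp hx
    obtain ⟨c, rfl⟩ := Submodule.mem_span_singleton.mp hx2
    rcases eq_or_ne c 0 with hc | hc
    · simp [hc]
    · exact absurd (by simpa [hc] using Λ.smul_mem c⁻¹ hx1) ht
  have h := Submodule.finrank_sup_add_finrank_inf_eq Λ (K ∙ t)
  rw [hdis, finrank_bot, finrank_span_singleton ht0] at h
  omega

/-- If `i < k` and `a i < a (i+1) − 1` (an essential, non-final index), then `F (a i)` is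
the unique subspace `W` of dimension `a i` with `dim (Λ ⊓ W) ≥ i` for every `k`-plane `Λ`
in the Schubert variety. -/
theorem essential_subspace_unique {V : Type*} [AddCommGroup V] [Module ℂ V]
    [FiniteDimensional ℂ V] (n k : ℕ) (hn : finrank ℂ V = n)
    (F : ℕ → Submodule ℂ V) (hFmono : ∀ j, F j ≤ F (j + 1))
    (hFdim : ∀ j, j ≤ n → finrank ℂ ↥(F j) = j)
    (a : ℕ → ℕ) (ha1 : 1 ≤ a 1) (han : a k ≤ n)
    (hainc : ∀ i, 1 ≤ i → i < k → a i < a (i + 1))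
    (i : ℕ) (hi1 : 1 ≤ i) (hik : i < k) (hess : a i + 1 < a (i + 1))
    (W : Submodule ℂ V) (hWdim : finrank ℂ W = a i)
    (hW : ∀ Λ : Submodule ℂ V, finrank ℂ Λ = k →
      (∀ j, 1 ≤ j → j ≤ k → j ≤ finrank ℂ ↥(Λ ⊓ F (a j))) →
      i ≤ finrank ℂ ↥(Λ ⊓ W)) :
    W = F (a i) := by
  have Fmono : Monotone F := monotone_nat_of_le_succ hFmono
  -- growth of the Schubert index
  have haLE : ∀ q, 1 ≤ q → ∀ p, 1 ≤ p → p ≤ q → q ≤ k → a p + (q - p) ≤ a q := by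
    intro q
    induction q with
    | zero => intro h; omega
    | succ q ih =>
      intro _ p hp hpq hqk
      rcases Nat.lt_or_ge p (q + 1) with h | h
      · have hq1 : 1 ≤ q := by omega
        have h1 := ih hq1 p hp (by omega) (by omega)
        have h2 := hainc q hq1 (by omega)
        omega
      · have : p = q + 1 := by omega
        subst this
        simp
  have hai_i : i ≤ a i := by
    have := haLE i hi1 1 le_rfl hi1 (by omega)
    omega
  have hain : a i ≤ n := by
    have := haLE k (by omega) i hi1 (by omega) le_rfl
    omega
  have haln : ∀ l, 1 ≤ l → l ≤ k → a l ≤ n := by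
    intro l h1 h2
    have := haLE k (by omega) l h1 h2 le_rfl
    omega
  have hall : ∀ l, 1 ≤ l → l ≤ k → l ≤ a l := by
    intro l h1 h2
    have := haLE l h1 1 le_rfl h1 h2
    omega
  -- if `F (a i) ≤ W` we are done
  by_cases hFW : F (a i) ≤ W
  · exact (Submodule.eq_of_le_of_finrank_le hFW
      (by rw [hWdim, hFdim (a i) hain])).symm
  -- choose `v ∈ F (a i)` with `v ∉ W` and `v ∉ F (i-1)`
  have hFi1 : F (i - 1) ≤ F (a i) := Fmono (by omega)
  have hnotle2 : ¬ F (a i) ≤ F (i - 1) := by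
    intro h
    have h1 := Submodule.finrank_mono h
    rw [hFdim (a i) hain, hFdim (i - 1) (by omega)] at h1
    omega
  obtain ⟨v, hvF, hvW, hvM⟩ := exists_mem_notMem_two hFW hnotle2
  set S : Submodule ℂ V := F (i - 1) ⊔ (ℂ ∙ v) with hSdef
  have hvS : v ∈ S := Submodule.mem_sup_right (Submodule.mem_span_singleton_self v)
  have hSle : S ≤ F (a i) := sup_le hFi1 ((Submodule.span_singleton_le_iff_mem v _).mpr hvF)
  have hSdim : finrank ℂ S = i := by
    have h := finrank_sup_span_singleton_of_notMem (F (i - 1)) hvM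
    rw [hFdim (i - 1) (by omega)] at h
    rw [hSdef, h]
    omega
  have hSW : finrank ℂ ↥(S ⊓ W) ≤ i - 1 := by
    have hlt : S ⊓ W < S := by
      refine lt_of_le_of_ne inf_le_left (fun h => hvW ?_)
      have : S ≤ W := by rw [← h]; exact inf_le_right
      exact this hvS
    have := Submodule.finrank_lt_finrank_of_lt hlt
    omega
  -- main construction by induction
  have key : ∀ j, i ≤ j → j ≤ k → ∃ Λ : Submodule ℂ V,
      finrank ℂ Λ = j ∧ Λ ≤ F (a j) ∧ finrank ℂ ↥(Λ ⊓ W) ≤ i - 1 ∧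
      ∀ l, 1 ≤ l → l ≤ j → l ≤ finrank ℂ ↥(Λ ⊓ F (a l)) := by
    intro j hij
    induction j, hij using Nat.le_induction with
    | base =>
      intro _
      refine ⟨S, hSdim, hSle, hSW, ?_⟩
      intro l h1 h2
      rcases eq_or_lt_of_le h2 with h | h
      · subst h
        have hinf : S ⊓ F (a l) = S := inf_eq_left.mpr hSle
        rw [hinf, hSdim]
      · have hFlS : F l ≤ S := le_trans (Fmono (by omega : l ≤ i - 1)) le_sup_left
        have hFlal : F l ≤ F (a l) := Fmono (hall l h1 (by omega))
        have h3 := Submodule.finrank_mono (le_inf hFlS hFlal)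
        rw [hFdim l (by omega : l ≤ n)] at h3
        exact h3
    | succ j hij ih =>
      intro hjk1
      obtain ⟨Λ, hΛdim, hΛle, hΛW, hΛlow⟩ := ih (by omega)
      have haj1n : a (j + 1) ≤ n := haln (j + 1) (by omega) hjk1
      have haj1 : j + 1 ≤ a (j + 1) := hall (j + 1) (by omega) hjk1
      have hFj1dim : finrank ℂ ↥(F (a (j + 1))) = a (j + 1) := hFdim _ haj1n
      have hΛleF : Λ ≤ F (a (j + 1)) :=
        hΛle.trans (Fmono (le_of_lt (hainc j (by omega) (by omega))))
      by_cases hcase : F (a (j + 1)) ≤ W ⊔ Λ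
      · -- "bad" case: the current intersection with W is small, can afford +1
        have hsupinf := Submodule.finrank_sup_add_finrank_inf_eq W Λ
        rw [inf_comm W Λ] at hsupinf
        have h2 : a (j + 1) ≤ finrank ℂ ↥(W ⊔ Λ) := by
          rw [← hFj1dim]; exact Submodule.finrank_mono hcase
        have hchain : a (i + 1) + (j + 1 - (i + 1)) ≤ a (j + 1) :=
          haLE (j + 1) (by omega) (i + 1) (by omega) (by omega) hjk1
        have hnle : ¬ F (a (j + 1)) ≤ Λ := by
          intro h
          have h3 := Submodule.finrank_mono h
          rw [hFj1dim, hΛdim] at h3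
          omega
        obtain ⟨t, htF, htΛ⟩ := SetLike.not_le_iff_exists.mp hnle
        have hrank : finrank ℂ ↥(Λ ⊔ (ℂ ∙ t)) = j + 1 := by
          rw [finrank_sup_span_singleton_of_notMem Λ htΛ, hΛdim]
        have hleF : Λ ⊔ (ℂ ∙ t) ≤ F (a (j + 1)) :=
          sup_le hΛleF ((Submodule.span_singleton_le_iff_mem t _).mpr htF)
        refine ⟨Λ ⊔ (ℂ ∙ t), hrank, hleF, ?_, ?_⟩
        · set X : Submodule ℂ V := (Λ ⊔ (ℂ ∙ t)) ⊓ W with hXdef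
          have e1 := Submodule.finrank_sup_add_finrank_inf_eq X Λ
          have e2 : finrank ℂ ↥(X ⊔ Λ) ≤ finrank ℂ ↥(Λ ⊔ (ℂ ∙ t)) :=
            Submodule.finrank_mono (sup_le inf_le_left le_sup_left)
          have e3 : finrank ℂ ↥(X ⊓ Λ) ≤ finrank ℂ ↥(Λ ⊓ W) :=
            Submodule.finrank_mono (le_inf inf_le_right (inf_le_left.trans inf_le_right))
          omega
        · intro l h1 h2
          rcases eq_or_lt_of_le h2 with h | h
          · subst h
            have hinf : (Λ ⊔ (ℂ ∙ t)) ⊓ F (a (j + 1)) = Λ ⊔ (ℂ ∙ t) := inf_eq_left.mpr hleF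
            rw [hinf, hrank]
          · have := hΛlow l h1 (by omega)
            exact this.trans (Submodule.finrank_mono
              (inf_le_inf_right _ le_sup_left))
      · -- "good" case: adjoin a vector avoiding `W ⊔ Λ`
        obtain ⟨t, htF, htWΛ⟩ := SetLike.not_le_iff_exists.mp hcase
        have htΛ : t ∉ Λ := fun h => htWΛ (Submodule.mem_sup_right h)
        have hrank : finrank ℂ ↥(Λ ⊔ (ℂ ∙ t)) = j + 1 := by
          rw [finrank_sup_span_singleton_of_notMem Λ htΛ, hΛdim]
        have hleF : Λ ⊔ (ℂ ∙ t) ≤ F (a (j + 1)) :=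
          sup_le hΛleF ((Submodule.span_singleton_le_iff_mem t _).mpr htF)
        refine ⟨Λ ⊔ (ℂ ∙ t), hrank, hleF, ?_, ?_⟩
        · have hsub : (Λ ⊔ (ℂ ∙ t)) ⊓ W ≤ Λ ⊓ W := by
            intro x hx
            obtain ⟨hx1, hx2⟩ := Submodule.mem_inf.mp hx
            obtain ⟨y, hy, z, hz, rfl⟩ := Submodule.mem_sup.mp hx1
            obtain ⟨c, rfl⟩ := Submodule.mem_span_singleton.mp hz
            rcases eq_or_ne c 0 with hc | hc
            · subst hc
              simp only [zero_smul, add_zero] at hx2 ⊢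
              exact Submodule.mem_inf.mpr ⟨hy, hx2⟩
            · exfalso
              apply htWΛ
              have hmem : (y + c • t) - y ∈ W ⊔ Λ :=
                sub_mem (Submodule.mem_sup_left hx2) (Submodule.mem_sup_right hy)
              have := (W ⊔ Λ).smul_mem c⁻¹ hmem
              simpa [hc] using this
          exact (Submodule.finrank_mono hsub).trans hΛW
        · intro l h1 h2
          rcases eq_or_lt_of_le h2 with h | h
          · subst h
            have hinf : (Λ ⊔ (ℂ ∙ t)) ⊓ F (a (j + 1)) = Λ ⊔ (ℂ ∙ t) := inf_eq_left.mpr hleF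
            rw [hinf, hrank]
          · have := hΛlow l h1 (by omega)
            exact this.trans (Submodule.finrank_mono
              (inf_le_inf_right _ le_sup_left))
  obtain ⟨Λ, h1, _, h3, h4⟩ := key k (le_of_lt hik) le_rfl
  have := hW Λ h1 h4
  omega
end

section
/- Let V ≅ ℂⁿ carry two complete flags F_• and G_• in general position (dim(F_p ∩ G_q) = max(0, p + q − n)). Let a = (a_1 < ... < a_k) be a Schubert index and a* = (n − a_k + 1 < ... < n − a_1 + 1) its dual. Then there exists exactly one k-dimensional subspace Λ of V with dim(Λ ∩ F_{a_i}) ≥ i and dim(Λ ∩ G_{a*_i}) ≥ i for all i, namely the span of the lines F_{a_i} ∩ G_{n − a_i + 1} for i = 1,...,k. -/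
open Module

/-- Auxiliary: given lines `L i` of rank one contained in increasing subspaces `W i`
with `W i ⊓ L (i+1) = ⊥`, the span of the first `m` lines has rank `m` and is
contained in `W m`. -/
lemma schubert_aux_sup {V : Type*} [AddCommGroup V] [Module ℂ V]
    [FiniteDimensional ℂ V] (k : ℕ) (L W : ℕ → Submodule ℂ V)
    (hL1 : ∀ i, 1 ≤ i → i ≤ k → finrank ℂ ↥(L i) = 1)
    (hLW : ∀ i, 1 ≤ i → i ≤ k → L i ≤ W i)
    (hWmono : ∀ i, 1 ≤ i → i < k → W i ≤ W (i + 1))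
    (hdisj : ∀ i, 1 ≤ i → i < k → W i ⊓ L (i + 1) = ⊥) :
    ∀ m, m ≤ k → finrank ℂ ↥(⨆ i ∈ Finset.Icc 1 m, L i) = m ∧
      (1 ≤ m → (⨆ i ∈ Finset.Icc 1 m, L i) ≤ W m) := by
  intro m
  induction m with
  | zero =>
    intro _
    refine ⟨?_, by omega⟩
    have : Finset.Icc 1 0 = (∅ : Finset ℕ) := by decide
    rw [this]
    simp
  | succ m ih =>
    intro hmk
    obtain ⟨ihdim, ihle⟩ := ih (by omega)
    set S : Submodule ℂ V := ⨆ i ∈ Finset.Icc 1 m, L i with hS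
    have hsplit : (⨆ i ∈ Finset.Icc 1 (m + 1), L i) = L (m + 1) ⊔ S := by
      rw [← Finset.insert_Icc_right_eq_Icc_add_one (by omega), Finset.iSup_insert]
    have hSbot : S ⊓ L (m + 1) = ⊥ := by
      rcases Nat.eq_zero_or_pos m with hm0 | hm1
      · subst hm0
        have : Finset.Icc 1 0 = (∅ : Finset ℕ) := by decide
        rw [hS, this]
        simp
      · have h1 : S ⊓ L (m + 1) ≤ W m ⊓ L (m + 1) :=
          inf_le_inf_right _ (ihle hm1)
        rw [hdisj m hm1 (by omega)] at h1
        exact le_bot_iff.mp h1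
    constructor
    · rw [hsplit]
      have hcount := Submodule.finrank_sup_add_finrank_inf_eq (L (m + 1)) S
      rw [inf_comm] at hSbot
      rw [hSbot, finrank_bot, add_zero, ihdim, hL1 (m + 1) (by omega) hmk] at hcount
      omega
    · intro _
      rw [hsplit]
      refine sup_le (hLW (m + 1) (by omega) hmk) ?_
      rcases Nat.eq_zero_or_pos m with hm0 | hm1
      · subst hm0
        have : Finset.Icc 1 0 = (∅ : Finset ℕ) := by decide
        rw [hS, this]
        simp
      · exact (ihle hm1).trans (hWmono m hm1 (by omega))

/-- For two complete flags in general position and a Schubert index `a` with dual index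
`a* i = n − a (k − i + 1) + 1`, the unique `k`-plane satisfying the Schubert conditions
for both flags is the span of the lines `F (a i) ⊓ G (n − a i + 1)`, `i = 1, ..., k`. -/
theorem unique_plane_dual_schubert {V : Type*} [AddCommGroup V] [Module ℂ V]
    [FiniteDimensional ℂ V] (n k : ℕ) (hn : finrank ℂ V = n)
    (F G : ℕ → Submodule ℂ V)
    (hFmono : ∀ j, F j ≤ F (j + 1)) (hFdim : ∀ j, j ≤ n → finrank ℂ ↥(F j) = j)
    (hGmono : ∀ j, G j ≤ G (j + 1)) (hGdim : ∀ j, j ≤ n → finrank ℂ ↥(G j) = j)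
    (hgen : ∀ p q, p ≤ n → q ≤ n → finrank ℂ ↥(F p ⊓ G q) = p + q - n)
    (a : ℕ → ℕ)
    (ha1 : 1 ≤ a 1) (han : a k ≤ n) (hainc : ∀ i, 1 ≤ i → i < k → a i < a (i + 1)) :
    ∀ Λ : Submodule ℂ V,
      (finrank ℂ Λ = k ∧
        ∀ i, 1 ≤ i → i ≤ k →
          i ≤ finrank ℂ ↥(Λ ⊓ F (a i)) ∧
          i ≤ finrank ℂ ↥(Λ ⊓ G (n - a (k - i + 1) + 1))) ↔
      Λ = ⨆ i ∈ Finset.Icc 1 k, (F (a i) ⊓ G (n - a i + 1)) := by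
  -- basic monotonicity of the flags
  have hFm : Monotone F := monotone_nat_of_le_succ hFmono
  have hGm : Monotone G := monotone_nat_of_le_succ hGmono
  -- strict monotonicity of `a` on `[1, k]`
  have hstrict : ∀ i j, 1 ≤ i → i < j → j ≤ k → a i < a j := by
    intro i j hi hij hjk
    induction j with
    | zero => omega
    | succ m ihm =>
      rcases Nat.lt_or_ge i m with him | him
      · exact lt_trans (ihm (by omega) (by omega)) (hainc m (by omega) (by omega))
      · have : i = m := by omega
        subst this
        exact hainc i hi (by omega)
  have hamono : ∀ i j, 1 ≤ i → i ≤ j → j ≤ k → a i ≤ a j := by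
    intro i j hi hij hjk
    rcases Nat.lt_or_ge i j with h | h
    · exact le_of_lt (hstrict i j hi h hjk)
    · have : i = j := by omega
      subst this; exact le_rfl
  have hbound : ∀ i, 1 ≤ i → i ≤ k → 1 ≤ a i ∧ a i ≤ n := by
    intro i hi hik
    exact ⟨ha1.trans (hamono 1 i le_rfl hi hik), (hamono i k hi hik le_rfl).trans han⟩
  -- the lines
  set L : ℕ → Submodule ℂ V := fun i => F (a i) ⊓ G (n - a i + 1) with hLdef
  have hL1 : ∀ i, 1 ≤ i → i ≤ k → finrank ℂ ↥(L i) = 1 := by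
    intro i hi hik
    obtain ⟨h1, h2⟩ := hbound i hi hik
    rw [hLdef]
    have := hgen (a i) (n - a i + 1) h2 (by omega)
    rw [this]
    omega
  have hFG0 : ∀ i j, 1 ≤ i → i < j → j ≤ k → F (a i) ⊓ G (n - a j + 1) = ⊥ := by
    intro i j hi hij hjk
    obtain ⟨hi1, hi2⟩ := hbound i hi (by omega)
    obtain ⟨hj1, hj2⟩ := hbound j (by omega) hjk
    have hs := hstrict i j hi hij hjk
    have := hgen (a i) (n - a j + 1) hi2 (by omega)
    have h0 : finrank ℂ ↥(F (a i) ⊓ G (n - a j + 1)) = 0 := by omega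
    exact Submodule.finrank_eq_zero.mp h0
  -- the span of the first `m` lines
  have auxF := schubert_aux_sup k L (fun i => F (a i)) hL1
    (fun i _ _ => inf_le_left)
    (fun i hi hik => hFm (hamono i (i + 1) hi (by omega) (by omega)))
    (by
      intro i hi hik
      have h1 : F (a i) ⊓ L (i + 1) ≤ F (a i) ⊓ G (n - a (i + 1) + 1) :=
        inf_le_inf_left _ inf_le_right
      rw [hFG0 i (i + 1) hi (by omega) (by omega)] at h1
      exact le_bot_iff.mp h1)
  -- the span of the last `m` lines
  have auxG := schubert_aux_sup k (fun i => L (k - i + 1))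
    (fun i => G (n - a (k - i + 1) + 1))
    (fun i hi hik => hL1 (k - i + 1) (by omega) (by omega))
    (fun i _ _ => inf_le_right)
    (by
      intro i hi hik
      show G (n - a (k - i + 1) + 1) ≤ G (n - a (k - (i + 1) + 1) + 1)
      have e : k - (i + 1) + 1 = k - i := by omega
      rw [e]
      refine hGm ?_
      have := hstrict (k - i) (k - i + 1) (by omega) (by omega) (by omega)
      omega)
    (by
      intro i hi hik
      show G (n - a (k - i + 1) + 1) ⊓ L (k - (i + 1) + 1) = ⊥
      have e : k - (i + 1) + 1 = k - i := by omega
      rw [e]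
      have h1 : G (n - a (k - i + 1) + 1) ⊓ L (k - i) ≤
          F (a (k - i)) ⊓ G (n - a (k - i + 1) + 1) :=
        le_inf (inf_le_right.trans inf_le_left) inf_le_left
      rw [hFG0 (k - i) (k - i + 1) (by omega) (by omega) (by omega)] at h1
      exact le_bot_iff.mp h1)
  set Λ₀ : Submodule ℂ V := ⨆ i ∈ Finset.Icc 1 k, L i with hΛ₀
  have hΛ₀dim : finrank ℂ Λ₀ = k := (auxF k le_rfl).1
  have hLle : ∀ i, 1 ≤ i → i ≤ k → L i ≤ Λ₀ := by
    intro i hi hik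
    exact le_iSup₂ (f := fun i _ => L i) i (Finset.mem_Icc.mpr ⟨hi, hik⟩)
  intro Λ
  constructor
  · -- uniqueness: any such Λ equals Λ₀
    rintro ⟨hdim, hcond⟩
    have hle : Λ₀ ≤ Λ := by
      refine iSup₂_le ?_
      intro i hi
      obtain ⟨hi1, hik⟩ := Finset.mem_Icc.mp hi
      set A : Submodule ℂ V := Λ ⊓ F (a i) with hA
      set B : Submodule ℂ V := Λ ⊓ G (n - a i + 1) with hB
      have hdA : i ≤ finrank ℂ A := (hcond i hi1 hik).1
      have hdB : k - i + 1 ≤ finrank ℂ B := by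
        have := (hcond (k - i + 1) (by omega) (by omega)).2
        have e : k - (k - i + 1) + 1 = i := by omega
        rwa [e] at this
      have hsupΛ : A ⊔ B ≤ Λ := sup_le inf_le_left inf_le_left
      have hsupk : finrank ℂ ↥(A ⊔ B) ≤ k := hdim ▸ Submodule.finrank_mono hsupΛ
      have hcount := Submodule.finrank_sup_add_finrank_inf_eq A B
      have hAB1 : 1 ≤ finrank ℂ ↥(A ⊓ B) := by omega
      have hABle : A ⊓ B ≤ L i :=
        le_inf (inf_le_left.trans inf_le_right) (inf_le_right.trans inf_le_right)
      have heq : A ⊓ B = L i :=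
        Submodule.eq_of_le_of_finrank_le hABle (by rw [hL1 i hi1 hik]; omega)
      rw [← heq]
      exact inf_le_left.trans inf_le_left
    exact (Submodule.eq_of_le_of_finrank_le hle (by omega)).symm
  · -- existence: Λ₀ satisfies the conditions
    rintro rfl
    refine ⟨hΛ₀dim, ?_⟩
    intro i hi hik
    constructor
    · have h1 : (⨆ j ∈ Finset.Icc 1 i, L j) ≤ Λ₀ ⊓ F (a i) := by
        refine le_inf ?_ ((auxF i hik).2 hi)
        refine iSup₂_le ?_
        intro j hj
        obtain ⟨hj1, hji⟩ := Finset.mem_Icc.mp hj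
        exact hLle j hj1 (hji.trans hik)
      calc i = finrank ℂ ↥(⨆ j ∈ Finset.Icc 1 i, L j) := ((auxF i hik).1).symm
        _ ≤ finrank ℂ ↥(Λ₀ ⊓ F (a i)) := Submodule.finrank_mono h1
    · have h1 : (⨆ j ∈ Finset.Icc 1 i, L (k - j + 1)) ≤
          Λ₀ ⊓ G (n - a (k - i + 1) + 1) := by
        refine le_inf ?_ ((auxG i hik).2 hi)
        refine iSup₂_le ?_
        intro j hj
        obtain ⟨hj1, hji⟩ := Finset.mem_Icc.mp hj
        exact hLle (k - j + 1) (by omega) (by omega)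
      calc i = finrank ℂ ↥(⨆ j ∈ Finset.Icc 1 i, L (k - j + 1)) := ((auxG i hik).1).symm
        _ ≤ finrank ℂ ↥(Λ₀ ⊓ G (n - a (k - i + 1) + 1)) := Submodule.finrank_mono h1
end

section
/- Let q be a nondegenerate symmetric bilinear form on V ≅ ℂⁿ, p a nonzero isotropic vector (q(p,p) = 0), F an isotropic subspace with p ∉ F and p ∉ F^⊥. Then W := span({p}) + (p^⊥ ∩ F) is an isotropic subspace with dim W = dim F, and for any subspace Λ ⊆ p^⊥ containing p one has Λ ∩ W^⊥ = Λ ∩ (p^⊥ ∩ F)^⊥. -/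
open Module

/-- Orthogonal complement of a subspace with respect to a bilinear form. -/
def orthCompl {V : Type*} [AddCommGroup V] [Module ℂ V]
    (B : V →ₗ[ℂ] V →ₗ[ℂ] ℂ) (W : Submodule ℂ V) : Submodule ℂ V where
  carrier := {v | ∀ w ∈ W, B v w = 0}
  add_mem' := by
    intro a b ha hb w hw
    simp [map_add, ha w hw, hb w hw]
  zero_mem' := by
    intro w hw
    simp
  smul_mem' := by
    intro c a ha w hw
    simp [ha w hw]

/-- A subspace is isotropic when the form vanishes identically on it. -/
def IsIsotropic {V : Type*} [AddCommGroup V] [Module ℂ V]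
    (B : V →ₗ[ℂ] V →ₗ[ℂ] ℂ) (W : Submodule ℂ V) : Prop :=
  ∀ v ∈ W, ∀ w ∈ W, B v w = 0

/-- Nondegeneracy of a bilinear form. -/
def Nondeg {V : Type*} [AddCommGroup V] [Module ℂ V] (B : V →ₗ[ℂ] V →ₗ[ℂ] ℂ) : Prop :=
  ∀ v : V, (∀ w : V, B v w = 0) → v = 0

/-- Symmetry of a bilinear form. -/
def IsSymmB {V : Type*} [AddCommGroup V] [Module ℂ V] (B : V →ₗ[ℂ] V →ₗ[ℂ] ℂ) : Prop :=
  ∀ v w : V, B v w = B w v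

/-- Alternating bilinear form. -/
def IsAltB {V : Type*} [AddCommGroup V] [Module ℂ V] (B : V →ₗ[ℂ] V →ₗ[ℂ] ℂ) : Prop :=
  ∀ v : V, B v v = 0

/-- For a nonzero isotropic vector `p` with `p ∉ F` and `p ∉ F^⊥`, the subspace
`W = span {p} + (p^⊥ ⊓ F)` is isotropic of the same dimension as `F`, and for any
subspace `Λ ⊆ p^⊥` containing `p`, `Λ ⊓ W^⊥ = Λ ⊓ (p^⊥ ⊓ F)^⊥`. -/
theorem span_point_isotropic {V : Type*} [AddCommGroup V] [Module ℂ V]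
    [FiniteDimensional ℂ V]
    (q : V →ₗ[ℂ] V →ₗ[ℂ] ℂ) (hsymm : IsSymmB q) (hnd : Nondeg q)
    (p : V) (hp0 : p ≠ 0) (hpp : q p p = 0)
    (F : Submodule ℂ V) (hF : IsIsotropic q F)
    (hpF : p ∉ F) (hpFperp : p ∉ orthCompl q F) :
    IsIsotropic q (Submodule.span ℂ {p} ⊔ (orthCompl q (Submodule.span ℂ {p}) ⊓ F)) ∧
    finrank ℂ ↥(Submodule.span ℂ {p} ⊔ (orthCompl q (Submodule.span ℂ {p}) ⊓ F)) =
      finrank ℂ F ∧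
    ∀ Λ : Submodule ℂ V, Λ ≤ orthCompl q (Submodule.span ℂ {p}) → p ∈ Λ →
      Λ ⊓ orthCompl q
          (Submodule.span ℂ {p} ⊔ (orthCompl q (Submodule.span ℂ {p}) ⊓ F)) =
        Λ ⊓ orthCompl q (orthCompl q (Submodule.span ℂ {p}) ⊓ F) := by
  classical
  set P := Submodule.span ℂ {p} with hP
  set G := orthCompl q P ⊓ F with hGdef
  have hmemP : ∀ v : V, v ∈ orthCompl q P ↔ q v p = 0 := by
    intro v
    constructor
    · intro h; exact h p (Submodule.mem_span_singleton_self p)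
    · intro h w hw
      obtain ⟨c, rfl⟩ := Submodule.mem_span_singleton.mp hw
      simp [map_smul, h]
  have hiso : IsIsotropic q (P ⊔ G) := by
    intro v hv w hw
    rw [Submodule.mem_sup] at hv hw
    obtain ⟨a, ha, g, hg, rfl⟩ := hv
    obtain ⟨b, hb, g', hg', rfl⟩ := hw
    obtain ⟨c, rfl⟩ := Submodule.mem_span_singleton.mp ha
    obtain ⟨d, rfl⟩ := Submodule.mem_span_singleton.mp hb
    have h1 : q g p = 0 := (hmemP g).mp hg.1
    have h2 : q g' p = 0 := (hmemP g').mp hg'.1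
    have h3 : q g g' = 0 := hF g hg.2 g' hg'.2
    have h4 : q p g' = 0 := by rw [hsymm]; exact h2
    simp [map_add, map_smul, LinearMap.add_apply, LinearMap.smul_apply, hpp, h1, h3, h4]
  have hPG : P ⊓ G = ⊥ := by
    rw [Submodule.eq_bot_iff]
    rintro v ⟨hv1, hv2⟩
    obtain ⟨c, rfl⟩ := Submodule.mem_span_singleton.mp hv1
    by_contra h
    have hc : c ≠ 0 := by rintro rfl; simp at h
    have : p ∈ F := by
      have := F.smul_mem c⁻¹ hv2.2
      rwa [smul_smul, inv_mul_cancel₀ hc, one_smul] at this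
    exact hpF this
  have hdim : finrank ℂ ↥(P ⊔ G) = finrank ℂ F := by
    have h1 : finrank ℂ ↥(P ⊔ G) + finrank ℂ ↥(P ⊓ G) = finrank ℂ P + finrank ℂ G :=
      Submodule.finrank_sup_add_finrank_inf_eq P G
    rw [hPG, finrank_bot] at h1
    have hPr : finrank ℂ P = 1 := finrank_span_singleton hp0
    set ψ : F →ₗ[ℂ] ℂ := (q.flip p).comp F.subtype with hψ
    have hGker : G = (LinearMap.ker ψ).map F.subtype := by
      ext v
      constructor
      · rintro ⟨hv1, hv2⟩
        refine ⟨⟨v, hv2⟩, ?_, rfl⟩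
        simp only [LinearMap.mem_ker, hψ, LinearMap.comp_apply, LinearMap.flip_apply,
          Submodule.coe_subtype]
        exact (hmemP v).mp hv1
      · rintro ⟨⟨v, hv⟩, hk, rfl⟩
        simp only [LinearMap.mem_ker, hψ, LinearMap.comp_apply, LinearMap.flip_apply,
          Submodule.coe_subtype] at hk
        exact ⟨(hmemP v).mpr hk, hv⟩
    have hrange : LinearMap.range ψ = ⊤ := by
      have hex : ∃ w ∈ F, q p w ≠ 0 := by
        by_contra h
        push_neg at h
        exact hpFperp (fun w hw => h w hw)
      obtain ⟨w, hwF, hw⟩ := hex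
      have hw' : q w p ≠ 0 := by rw [hsymm]; exact hw
      rw [eq_top_iff]
      intro c _
      refine ⟨(c / q w p) • ⟨w, hwF⟩, ?_⟩
      simp only [map_smul, hψ, LinearMap.comp_apply, LinearMap.flip_apply,
        Submodule.coe_subtype, smul_eq_mul]
      field_simp
    have hrn : finrank ℂ (LinearMap.range ψ) + finrank ℂ (LinearMap.ker ψ) = finrank ℂ F :=
      LinearMap.finrank_range_add_finrank_ker ψ
    rw [hrange] at hrn
    have hr1 : finrank ℂ (⊤ : Submodule ℂ ℂ) = 1 := by
      rw [finrank_top]; exact finrank_self ℂ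
    rw [hr1] at hrn
    have hGfin : finrank ℂ G = finrank ℂ (LinearMap.ker ψ) := by
      rw [hGker, Submodule.finrank_map_subtype_eq]
    omega
  have horth : ∀ A B : Submodule ℂ V, orthCompl q (A ⊔ B) = orthCompl q A ⊓ orthCompl q B := by
    intro A B
    ext v
    constructor
    · intro h
      exact ⟨fun w hw => h w (Submodule.mem_sup_left hw),
             fun w hw => h w (Submodule.mem_sup_right hw)⟩
    · rintro ⟨h1, h2⟩ w hw
      rw [Submodule.mem_sup] at hw
      obtain ⟨a, ha, b, hb, rfl⟩ := hw
      rw [map_add, h1 a ha, h2 b hb, add_zero]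
  refine ⟨hiso, hdim, ?_⟩
  intro Lam hLam hpLam
  rw [horth]
  ext v
  simp only [Submodule.mem_inf]
  constructor
  · rintro ⟨h1, _, h3⟩; exact ⟨h1, h3⟩
  · rintro ⟨h1, h2⟩; exact ⟨h1, hLam h1, h2⟩
end

section
/- Let V ≅ ℂⁿ with nondegenerate symmetric bilinear form q, and let Λ_r ⊆ Λ_k be isotropic subspaces with dim Λ_r = d_r, dim Λ_k = d_k. Let F be an isotropic subspace of dimension b with w := dim(Λ_r ∩ F^⊥). Set U := Λ_r + (Λ_r^⊥ ∩ F). Then dim(Λ_k ∩ U^⊥) = d_r − w + dim(Λ_k ∩ F^⊥). -/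
open Module

section AuxLemmas
open Module
variable {V : Type*} [AddCommGroup V] [Module ℂ V]

lemma mem_orthCompl' {B : V →ₗ[ℂ] V →ₗ[ℂ] ℂ} {W : Submodule ℂ V} {v : V} :
    v ∈ orthCompl B W ↔ ∀ w ∈ W, B v w = 0 := Iff.rfl

lemma orthCompl_anti (B : V →ₗ[ℂ] V →ₗ[ℂ] ℂ) {P Q : Submodule ℂ V} (h : P ≤ Q) :
    orthCompl B Q ≤ orthCompl B P := fun v hv w hw => hv w (h hw)

lemma orthCompl_sup (B : V →ₗ[ℂ] V →ₗ[ℂ] ℂ) (P Q : Submodule ℂ V) :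
    orthCompl B (P ⊔ Q) = orthCompl B P ⊓ orthCompl B Q := by
  ext v
  constructor
  · intro h
    exact ⟨fun w hw => h w (le_sup_left (a := P) (b := Q) hw),
           fun w hw => h w (le_sup_right (a := P) (b := Q) hw)⟩
  · rintro ⟨h1, h2⟩ w hw
    rcases Submodule.mem_sup.mp hw with ⟨p, hp, r, hr, rfl⟩
    rw [map_add, h1 p hp, h2 r hr, add_zero]

lemma orthCompl_key [FiniteDimensional ℂ V] (q : V →ₗ[ℂ] V →ₗ[ℂ] ℂ) (hsymm : IsSymmB q)
    (A W : Submodule ℂ V) :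
    finrank ℂ ↥(A ⊓ orthCompl q W) + finrank ℂ ↥W =
      finrank ℂ ↥A + finrank ℂ ↥(W ⊓ orthCompl q A) := by
  set f : A →ₗ[ℂ] Module.Dual ℂ W := q.domRestrict₁₂ A W with hf
  set g : W →ₗ[ℂ] Module.Dual ℂ A := q.domRestrict₁₂ W A with hg
  have hker : ∀ (A W : Submodule ℂ V),
      finrank ℂ (LinearMap.ker (q.domRestrict₁₂ A W)) = finrank ℂ ↥(A ⊓ orthCompl q W) := by
    intro A W
    have hk : LinearMap.ker (q.domRestrict₁₂ A W) = (orthCompl q W).comap A.subtype := by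
      ext ⟨a, ha⟩
      simp only [LinearMap.mem_ker, Submodule.mem_comap, Submodule.coe_subtype, mem_orthCompl']
      constructor
      · intro h w hw
        exact congrArg (fun φ => φ ⟨w, hw⟩) h
      · intro h
        ext ⟨w, hw⟩
        exact h w hw
    rw [hk, (Submodule.equivMapOfInjective A.subtype A.injective_subtype _).finrank_eq,
      Submodule.map_comap_subtype]
  have hrange : finrank ℂ (LinearMap.range f) = finrank ℂ (LinearMap.range g) := by
    have hcomp : g = f.dualMap.comp (Module.evalEquiv ℂ W).toLinearMap := by
      ext w a
      simp [hg, hf, LinearMap.dualMap_apply, Module.evalEquiv_apply, LinearMap.domRestrict₁₂_apply]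
      exact hsymm (w:V) (a:V)
    rw [hcomp, LinearMap.range_comp, LinearEquiv.range, Submodule.map_top]
    exact (LinearMap.finrank_range_dualMap_eq_finrank_range f).symm
  have h1 := LinearMap.finrank_range_add_finrank_ker f
  have h2 := LinearMap.finrank_range_add_finrank_ker g
  rw [hker A W] at h1
  rw [hker W A] at h2
  omega

end AuxLemmas

/-- For isotropic subspaces `Λ_r ⊆ Λ_k` and an isotropic `F`, with
`w = dim (Λ_r ⊓ F^⊥)` and `U = Λ_r + (Λ_r^⊥ ⊓ F)`:
`dim (Λ_k ⊓ U^⊥) = d_r − w + dim (Λ_k ⊓ F^⊥)`, stated additively. -/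
theorem inf_orthCompl_span_dim {V : Type*} [AddCommGroup V] [Module ℂ V]
    [FiniteDimensional ℂ V]
    (q : V →ₗ[ℂ] V →ₗ[ℂ] ℂ) (hsymm : IsSymmB q) (hnd : Nondeg q)
    (Λr Λk : Submodule ℂ V) (hsub : Λr ≤ Λk) (hΛk : IsIsotropic q Λk)
    (dr dk : ℕ) (hdr : finrank ℂ Λr = dr) (hdk : finrank ℂ Λk = dk)
    (F : Submodule ℂ V) (hF : IsIsotropic q F) (b : ℕ) (hb : finrank ℂ F = b) :
    finrank ℂ ↥(Λk ⊓ orthCompl q (Λr ⊔ (orthCompl q Λr ⊓ F))) +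
        finrank ℂ ↥(Λr ⊓ orthCompl q F) =
      dr + finrank ℂ ↥(Λk ⊓ orthCompl q F) := by
  have hkr : Λk ≤ orthCompl q Λr := fun v hv w hw => hΛk v hv w (hsub hw)
  have h1 : Λk ⊓ orthCompl q (Λr ⊔ (orthCompl q Λr ⊓ F)) =
      Λk ⊓ orthCompl q (orthCompl q Λr ⊓ F) := by
    rw [orthCompl_sup, ← inf_assoc, inf_eq_left.mpr hkr]
  have h2 : (orthCompl q Λr ⊓ F) ⊓ orthCompl q Λk = F ⊓ orthCompl q Λk := by
    apply le_antisymm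
    · exact inf_le_inf_right _ inf_le_right
    · intro v hv
      exact ⟨⟨orthCompl_anti q hsub hv.2, hv.1⟩, hv.2⟩
  have Ea := orthCompl_key q hsymm Λk (orthCompl q Λr ⊓ F)
  have Eb := orthCompl_key q hsymm F Λk
  have Ec := orthCompl_key q hsymm F Λr
  have hWc : orthCompl q Λr ⊓ F = F ⊓ orthCompl q Λr := inf_comm _ _
  rw [h2, hdk, hWc] at Ea
  rw [hdk, hb] at Eb
  rw [hdr, hb] at Ec
  rw [h1, hWc]
  omega
end
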